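/- Let n ≥ 4 be an even integer and Λ = Cay(D_{2n}, Ψ) with Ψ = {b, ab, ..., a^{n-1}b} ∪ {a^{n/2}}. The minimum cardinality of a doubly resolving set of Λ equals n. -/

import Mathlib

/-- The Cayley graph of a group with connection set `S`. -/
def cayley {G : Type*} [Group G] (S : Set G) : SimpleGraph G :=
  SimpleGraph.fromRel (fun x y => x⁻¹ * y ∈ S)

/-- The connection set `Ψ = {b, ab, …, a^{n-1}b} ∪ {a^{n/2}}` in the dihedral group. -/
def Psi (n : ℕ) : Set (DihedralGroup n) :=
  {x | ∃ i : ZMod n, x = DihedralGroup.sr i} ∪ {DihedralGroup.r ((n / 2 : ℕ) : ZMod n)}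
/-- `S` is a doubly resolving set of `G`. -/
def IsDoublyResolvingSet {V : Type*} (G : SimpleGraph V) (S : Set V) : Prop :=
  ∀ u v : V, u ≠ v → ∃ x ∈ S, ∃ y ∈ S,
    (G.dist u x : ℤ) - (G.dist u y : ℤ) ≠ (G.dist v x : ℤ) - (G.dist v y : ℤ)

/-! In `Λ` the vertices `x` and `x a^{n/2}` are adjacent twins: `Λ` is `K_{n,n}` between rotations
and reflections together with the perfect matching `x ~ x a^{n/2}` on each side, so every distance
is `0`, `1` or `2` and every third vertex is equidistant from `x` and `x a^{n/2}`. A doubly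
resolving set therefore meets each of the `n` pairs `{x, x a^{n/2}}`, so it has at least `n`
elements. Conversely, every set meeting all these pairs is doubly resolving: by vertex-transitivity
it suffices to separate `1` from each `v ≠ 1`, which a short case analysis does. A set of coset
representatives of `⟨a^{n/2}⟩` meets all pairs and has exactly `n` elements. -/

namespace SimpleGraph

variable {V W : Type*} {G : SimpleGraph V} {G' : SimpleGraph W}

theorem Hom.edist_map_le (f : G →g G') (u v : V) : G'.edist (f u) (f v) ≤ G.edist u v := by
  by_cases h : G.Reachable u v
  · obtain ⟨p, hp⟩ := h.exists_walk_length_eq_edist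
    calc G'.edist (f u) (f v) ≤ (p.map f).length := edist_le _
      _ = G.edist u v := by rw [Walk.length_map, hp]
  · simp [edist_eq_top_of_not_reachable h]

theorem Iso.dist_map (f : G ≃g G') (u v : V) : G'.dist (f u) (f v) = G.dist u v := by
  have hge : G'.edist (f u) (f v) ≤ G.edist u v := f.toHom.edist_map_le u v
  have hle : G.edist u v ≤ G'.edist (f u) (f v) := by
    simpa using f.symm.toHom.edist_map_le (f u) (f v)
  rw [dist, dist, le_antisymm hge hle]

section Group

variable {M : Type*} [Group M] (s : Set M)

def mulCayleyMulLeft (g : M) : mulCayley s ≃g mulCayley s where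
  toEquiv := Equiv.mulLeft g
  map_rel_iff' := mulCayley_adj_mul_iff_right

theorem mulCayley_dist_mul_left (g u v : M) :
    (mulCayley s).dist (g * u) (g * v) = (mulCayley s).dist u v :=
  (mulCayleyMulLeft s g).dist_map u v

theorem mulCayley_dist_eq_dist_one (u v : M) :
    (mulCayley s).dist u v = (mulCayley s).dist 1 (u⁻¹ * v) := by
  rw [← mulCayley_dist_mul_left s u⁻¹, inv_mul_cancel]

end Group

end SimpleGraph

theorem cayley_eq_mulCayley {G : Type*} [Group G] (S : Set G) :
    cayley S = SimpleGraph.mulCayley S := by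
  ext u v
  simp [cayley, SimpleGraph.mulCayley_adj]

theorem IsDoublyResolvingSet.mem_or_mem {V : Type*} {G : SimpleGraph V} {S : Set V}
    (hS : IsDoublyResolvingSet G S) {u v : V} (huv : u ≠ v)
    (htwin : ∀ w, w ≠ u → w ≠ v → G.dist u w = G.dist v w) : u ∈ S ∨ v ∈ S := by
  by_contra! ⟨hu, hv⟩
  obtain ⟨x, hx, y, hy, hne⟩ := hS u v huv
  rw [htwin x (ne_of_mem_of_not_mem hx hu) (ne_of_mem_of_not_mem hx hv),
    htwin y (ne_of_mem_of_not_mem hy hu) (ne_of_mem_of_not_mem hy hv)] at hne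
  exact hne rfl

def MeetsPairs {G : Type*} [Mul G] (z : G) (S : Set G) : Prop :=
  ∀ x, x ∈ S ∨ x * z ∈ S

section MeetsPairs

variable {G : Type*} [Group G] {z : G} {S : Set G}

theorem MeetsPairs.preimage_mul_left (hS : MeetsPairs z S) (g : G) :
    MeetsPairs z ((g * ·) ⁻¹' S) := fun x => by
  simpa [mul_assoc] using hS (g * x)

theorem MeetsPairs.card_le_two_mul_ncard [Finite G] (hS : MeetsPairs z S) :
    Nat.card G ≤ 2 * S.ncard := by
  have hcover : (Set.univ : Set G) ⊆ S ∪ (· * z) ⁻¹' S := fun x _ => hS x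
  have hpre : ((· * z) ⁻¹' S).ncard = S.ncard :=
    Set.ncard_preimage_of_injective_subset_range (mul_left_injective z)
      (fun y _ => ⟨y * z⁻¹, inv_mul_cancel_right y z⟩)
  calc Nat.card G = (Set.univ : Set G).ncard := Set.ncard_univ G |>.symm
    _ ≤ (S ∪ (· * z) ⁻¹' S).ncard := Set.ncard_le_ncard hcover
    _ ≤ S.ncard + ((· * z) ⁻¹' S).ncard := Set.ncard_union_le _ _
    _ = 2 * S.ncard := by rw [hpre, two_mul]

theorem exists_meetsPairs_two_mul_ncard_eq [Finite G] (hz : orderOf z = 2) :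
    ∃ S : Set G, MeetsPairs z S ∧ 2 * S.ncard = Nat.card G := by
  let H := Subgroup.zpowers z
  refine ⟨Set.range (Quotient.out : G ⧸ H → G), fun x => ?_, ?_⟩
  · have hmem : x⁻¹ * (QuotientGroup.mk x : G ⧸ H).out ∈ H :=
      QuotientGroup.eq.mp (QuotientGroup.out_eq' _).symm
    classical
    rw [mem_zpowers_iff_mem_range_orderOf, hz] at hmem
    simp only [Finset.mem_image, Finset.mem_range] at hmem
    obtain ⟨k, hk, hkz⟩ := hmem
    have hout : (QuotientGroup.mk x : G ⧸ H).out = x * z ^ k := by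
      rw [hkz, mul_inv_cancel_left]
    interval_cases k
    · exact Or.inl ⟨_, by simpa using hout⟩
    · exact Or.inr ⟨_, by simpa using hout⟩
  · rw [Set.ncard_range_of_injective Quotient.out_injective, ← hz, ← Nat.card_zpowers]
    exact H.card_mul_index

end MeetsPairs

open SimpleGraph in
theorem MeetsPairs.isDoublyResolvingSet_mulCayley {G : Type*} [Group G] {s S : Set G} {z : G}
    (hres : ∀ T : Set G, MeetsPairs z T → ∀ v ≠ (1 : G), ∃ x ∈ T, ∃ y ∈ T,
      ((mulCayley s).dist 1 x : ℤ) - (mulCayley s).dist 1 y ≠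
        ((mulCayley s).dist v x : ℤ) - (mulCayley s).dist v y)
    (hS : MeetsPairs z S) : IsDoublyResolvingSet (mulCayley s) S := by
  intro u v huv
  obtain ⟨x, hx, y, hy, hne⟩ :=
    hres _ (hS.preimage_mul_left u) (u⁻¹ * v) (by rwa [Ne, inv_mul_eq_one])
  have hshift (w x : G) : (mulCayley s).dist w (u * x) = (mulCayley s).dist (u⁻¹ * w) x := by
    rw [← mulCayley_dist_mul_left s u⁻¹, inv_mul_cancel_left]
  refine ⟨u * x, hx, u * y, hy, ?_⟩
  rwa [hshift, hshift, hshift, hshift, inv_mul_cancel]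

namespace DihedralGroup

open SimpleGraph

variable {n : ℕ}

def half (n : ℕ) : ZMod n := (n / 2 : ℕ)

theorem half_add_half (hev : Even n) : half n + half n = 0 := by
  obtain ⟨k, rfl⟩ := hev
  rw [half, show (k + k) / 2 = k by omega, ← Nat.cast_add, ZMod.natCast_self]

theorem neg_half (hev : Even n) : -half n = half n :=
  neg_eq_of_add_eq_zero_left (half_add_half hev)

theorem half_ne_zero (hn : 2 ≤ n) : half n ≠ 0 := by
  have : NeZero n := ⟨by omega⟩
  rw [half, Ne, ZMod.natCast_eq_zero_iff]
  exact fun h => absurd (Nat.le_of_dvd (by omega) h) (by omega)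

theorem one_ne_half (hn : 4 ≤ n) : (1 : ZMod n) ≠ half n := by
  have : Fact (1 < n) := ⟨by omega⟩
  intro h
  have := congrArg ZMod.val h
  rw [ZMod.val_one, half, ZMod.val_cast_of_lt (by omega)] at this
  omega

theorem orderOf_r_half (hn : 2 ≤ n) (hev : Even n) : orderOf (r (half n)) = 2 :=
  orderOf_eq_prime (by rw [sq, r_mul_r, half_add_half hev, r_zero])
    (by rw [Ne, ← r_zero, r.injEq]; exact half_ne_zero hn)

theorem r_mem_Psi_iff (i : ZMod n) : r i ∈ Psi n ↔ i = half n := by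
  simp [Psi, half]

theorem sr_mem_Psi (i : ZMod n) : sr i ∈ Psi n := Or.inl ⟨i, rfl⟩

theorem mulCayley_Psi_adj_r_sr (i j : ZMod n) : (mulCayley (Psi n)).Adj (r i) (sr j) := by
  rw [mulCayley_adj, inv_r, r_mul_sr]
  exact ⟨by simp, Or.inl (sr_mem_Psi _)⟩

theorem mulCayley_Psi_dist_r_sr (i j : ZMod n) : (mulCayley (Psi n)).dist (r i) (sr j) = 1 :=
  dist_eq_one_iff_adj.mpr (mulCayley_Psi_adj_r_sr i j)

theorem mulCayley_Psi_dist_sr_r (i j : ZMod n) : (mulCayley (Psi n)).dist (sr i) (r j) = 1 :=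
  dist_eq_one_iff_adj.mpr (mulCayley_Psi_adj_r_sr j i).symm

theorem mulCayley_Psi_dist_one_r (hn : 2 ≤ n) (hev : Even n) (k : ZMod n) :
    (mulCayley (Psi n)).dist 1 (r k) = if k = 0 then 0 else if k = half n then 1 else 2 := by
  rw [one_def]
  split_ifs with h0 hhalf
  · rw [h0, dist_self]
  · refine dist_eq_one_iff_adj.mpr ((mulCayley_adj _ _ _).mpr ⟨?_, Or.inl ?_⟩)
    · rw [Ne, r.injEq, hhalf]
      exact (half_ne_zero hn).symm
    · rw [inv_r, r_mul_r, neg_zero, zero_add, r_mem_Psi_iff, hhalf]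
  · have hnadj : ¬ (mulCayley (Psi n)).Adj (r 0) (r k) := by
      rw [mulCayley_adj]
      rintro ⟨-, h | h⟩
      · rw [inv_r, r_mul_r, r_mem_Psi_iff, neg_zero, zero_add] at h
        exact hhalf h
      · rw [inv_r, r_mul_r, r_mem_Psi_iff, add_zero] at h
        exact hhalf (by rw [← neg_neg k, h, neg_half hev])
    rw [SimpleGraph.dist, edist_eq_two_iff.mpr ⟨fun h => h0 (r.inj h).symm, hnadj,
      ⟨sr 0, mulCayley_Psi_adj_r_sr 0 0, mulCayley_Psi_adj_r_sr k 0⟩⟩]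
    rfl

theorem mulCayley_Psi_dist_one_sr (k : ZMod n) : (mulCayley (Psi n)).dist 1 (sr k) = 1 := by
  rw [one_def]
  exact mulCayley_Psi_dist_r_sr 0 k

theorem mulCayley_Psi_dist_r_r (hn : 2 ≤ n) (hev : Even n) (i j : ZMod n) :
    (mulCayley (Psi n)).dist (r i) (r j) =
      if j = i then 0 else if j = i + half n then 1 else 2 := by
  rw [mulCayley_dist_eq_dist_one, inv_r, r_mul_r, mulCayley_Psi_dist_one_r hn hev]
  simp only [neg_add_eq_iff_eq_add, add_zero]

theorem mulCayley_Psi_dist_mul_r_half (hn : 2 ≤ n) (hev : Even n) {x w : DihedralGroup n}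
    (hwx : w ≠ x) (hwx' : w ≠ x * r (half n)) :
    (mulCayley (Psi n)).dist (x * r (half n)) w = (mulCayley (Psi n)).dist x w := by
  rw [mulCayley_dist_eq_dist_one _ (x * _), mulCayley_dist_eq_dist_one _ x, mul_inv_rev, mul_assoc]
  generalize hg : x⁻¹ * w = g
  have hg1 : g ≠ 1 := hg ▸ fun h => hwx (inv_mul_eq_one.mp h).symm
  have hg2 : g ≠ r (half n) := hg ▸ fun h => hwx' (inv_mul_eq_iff_eq_mul.mp h)
  rcases g with k | k
  · have hk0 : k ≠ 0 := fun h => hg1 (by rw [h, r_zero])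
    have hkh : k ≠ half n := fun h => hg2 (by rw [h])
    have hk0' : -half n + k ≠ 0 := fun h => hkh (neg_add_eq_zero.mp h).symm
    have hkh' : -half n + k ≠ half n := fun h => hk0 <| by
      rwa [neg_add_eq_iff_eq_add, half_add_half hev] at h
    rw [inv_r, r_mul_r, mulCayley_Psi_dist_one_r hn hev, mulCayley_Psi_dist_one_r hn hev,
      if_neg hk0, if_neg hkh, if_neg hk0', if_neg hkh']
  · rw [inv_r, r_mul_sr, mulCayley_Psi_dist_one_sr, mulCayley_Psi_dist_one_sr]

theorem meetsPairs_of_isDoublyResolvingSet (hn : 2 ≤ n) (hev : Even n) {T : Set (DihedralGroup n)}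
    (hT : IsDoublyResolvingSet (mulCayley (Psi n)) T) : MeetsPairs (r (half n)) T := fun x =>
  hT.mem_or_mem (by rw [Ne, eq_comm, mul_eq_left, ← r_zero, r.injEq]; exact half_ne_zero hn)
    fun _ hwx hwx' => (mulCayley_Psi_dist_mul_r_half hn hev hwx hwx').symm

theorem exists_r_mem_of_meetsPairs {T : Set (DihedralGroup n)} (hT : MeetsPairs (r (half n)) T)
    (i₀ : ZMod n) : ∃ i, (i = i₀ ∨ i = i₀ + half n) ∧ r i ∈ T := by
  rcases hT (r i₀) with h | h
  · exact ⟨i₀, Or.inl rfl, h⟩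
  · rw [r_mul_r] at h
    exact ⟨_, Or.inr rfl, h⟩

/- One witness is the member of `T` in the pair `{1, a^{n/2}}`, at distance `≤ 1` from `1`.
If `v` is a rotation, the other is a reflection in `T`, equidistant from `1` and `v`; if `v` is
a reflection, it is the member of `T` in `{a, a^{1+n/2}}`, at distance `2` from `1` and `1`
from `v`. -/
theorem exists_dist_sub_ne_of_meetsPairs (hn : 4 ≤ n) (hev : Even n)
    {T : Set (DihedralGroup n)} (hT : MeetsPairs (r (half n)) T) {v : DihedralGroup n}
    (hv : v ≠ 1) :
    ∃ x ∈ T, ∃ y ∈ T, ((mulCayley (Psi n)).dist 1 x : ℤ) - (mulCayley (Psi n)).dist 1 y ≠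
      ((mulCayley (Psi n)).dist v x : ℤ) - (mulCayley (Psi n)).dist v y := by
  have : Fact (1 < n) := ⟨by omega⟩
  have hhalf := half_ne_zero (n := n) (by omega)
  obtain ⟨i, hi, hiT⟩ := exists_r_mem_of_meetsPairs hT 0
  rw [zero_add] at hi
  rcases v with j | j
  · have hj : j ≠ 0 := fun h => hv (by rw [h, r_zero])
    obtain ⟨k, hkT⟩ : ∃ k, sr k ∈ T := by
      rcases hT (sr 0) with h | h
      · exact ⟨0, h⟩
      · rw [sr_mul_r] at h
        exact ⟨_, h⟩
    have hne : (mulCayley (Psi n)).dist 1 (r i) ≠ (mulCayley (Psi n)).dist (r j) (r i) := by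
      rw [mulCayley_Psi_dist_one_r (by omega) hev, mulCayley_Psi_dist_r_r (by omega) hev]
      rcases hi with rfl | rfl
      · rw [if_pos rfl, if_neg (Ne.symm hj)]
        split_ifs <;> simp
      · rw [if_neg hhalf, if_pos rfl, if_neg (fun h => hj (right_eq_add.mp h))]
        split_ifs <;> simp
    refine ⟨r i, hiT, sr k, hkT, ?_⟩
    rw [mulCayley_Psi_dist_one_sr, mulCayley_Psi_dist_r_sr]
    omega
  · obtain ⟨k, hk, hkT⟩ := exists_r_mem_of_meetsPairs hT 1
    have hi1 : (mulCayley (Psi n)).dist 1 (r i) ≤ 1 := by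
      rw [mulCayley_Psi_dist_one_r (by omega) hev]
      rcases hi with rfl | rfl <;> simp [hhalf]
    have hk2 : (mulCayley (Psi n)).dist 1 (r k) = 2 := by
      rw [mulCayley_Psi_dist_one_r (by omega) hev]
      rcases hk with rfl | rfl
      · simp [one_ne_half hn]
      · have h0 : 1 + half n ≠ 0 := by
          rw [Ne, add_eq_zero_iff_eq_neg, neg_half hev]
          exact one_ne_half hn
        rw [if_neg h0, if_neg (fun h => one_ne_zero (add_eq_right.mp h))]
    refine ⟨r i, hiT, r k, hkT, ?_⟩
    rw [mulCayley_Psi_dist_sr_r, mulCayley_Psi_dist_sr_r]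
    omega

end DihedralGroup

theorem cayley_min_doubly_resolving (n : ℕ) (hn : 4 ≤ n) (hev : Even n) :
    IsLeast {m : ℕ | ∃ S : Set (DihedralGroup n),
      S.ncard = m ∧ IsDoublyResolvingSet (cayley (Psi n)) S} n := by
  have : NeZero n := ⟨by omega⟩
  rw [cayley_eq_mulCayley]
  obtain ⟨S, hS, hcard⟩ :=
    exists_meetsPairs_two_mul_ncard_eq (DihedralGroup.orderOf_r_half (by omega) hev)
  rw [DihedralGroup.nat_card] at hcard
  refine ⟨⟨S, by omega, hS.isDoublyResolvingSet_mulCayley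
    fun T hT _ hv => DihedralGroup.exists_dist_sub_ne_of_meetsPairs hn hev hT hv⟩, ?_⟩
  rintro _ ⟨T, rfl, hT⟩
  have hcover :=
    (DihedralGroup.meetsPairs_of_isDoublyResolvingSet (by omega) hev hT).card_le_two_mul_ncard
  rw [DihedralGroup.nat_card] at hcover
  omega
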